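/- arXiv:1901.00467 — 3 statements merged into one kernel-verified Lean document; each statement's English description precedes it below -/
import Mathlib

section
/- For the Green's function G of the problem x''−x=0 with periodic boundary conditions x(0)=x(1), x'(0)=x'(1) on [0,1] (given explicitly as in the previous context), one has sup_{t∈[0,1]} ‖G(t,·)‖_{L²} = √((e² + 2e − 1)/(4(e−1)²)). -/
open Set Real MeasureTheory

noncomputable def periodicGreen (t s : ℝ) : ℝ :=
  if t ≤ s then
    (1/2) * ((1/(1 - exp 1)) * exp (s - t) + (exp 1/(1 - exp 1)) * exp (t - s))
  else
    (1/2) * ((exp 1/(1 - exp 1)) * exp (s - t) + (1/(1 - exp 1)) * exp (t - s))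

/-!
`G(t, s)` depends only on `s - t` modulo `1`: it equals `k (s - t)` for `t ≤ s` and `k (s - t + 1)`
for `s ≤ t`, where `k r = (eʳ + e¹⁻ʳ) / (2 (1 - e))`. Integrating over a full period of the
translated kernel does not depend on the translation, so `‖G(t, ·)‖²_{L²} = ∫₀¹ k²` for every
`t ∈ [0, 1]`, and the supremum is the square root of this constant, computed from the explicit
primitive of `k²`.
-/

theorem integral_comp_sub_add_one_add_integral_comp_sub {g : ℝ → ℝ}
    (hg : IntervalIntegrable g volume 0 1) {t : ℝ} (ht : t ∈ Icc (0 : ℝ) 1) :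
    (∫ s in (0 : ℝ)..t, g (s - t + 1)) + ∫ s in t..1, g (s - t) = ∫ r in (0 : ℝ)..1, g r := by
  have hmem : 1 - t ∈ uIcc (0 : ℝ) 1 := by
    rw [uIcc_of_le zero_le_one]; constructor <;> linarith [ht.1, ht.2]
  have hshift : ∫ s in (0 : ℝ)..t, g (s - t + 1) = ∫ r in 1 - t..1, g r := by
    have := intervalIntegral.integral_comp_add_right g (a := 0) (b := t) (1 - t)
    simp only [zero_add, add_sub_cancel] at this
    rw [← this]
    simp only [sub_add_eq_add_sub, add_sub_assoc]
  rw [hshift, intervalIntegral.integral_comp_sub_right, sub_self, add_comm,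
    intervalIntegral.integral_add_adjacent_intervals
      (hg.mono_set (uIcc_subset_uIcc_left hmem)) (hg.mono_set (uIcc_subset_uIcc_right hmem))]

noncomputable def periodicKernel (r : ℝ) : ℝ := (exp r + exp (1 - r)) / (1 - exp 1) / 2

lemma periodicGreen_of_le {t s : ℝ} (h : t ≤ s) : periodicGreen t s = periodicKernel (s - t) := by
  rw [periodicGreen, if_pos h, periodicKernel, show 1 - (s - t) = 1 + (t - s) by ring, exp_add]
  ring

lemma periodicGreen_of_ge {t s : ℝ} (h : s ≤ t) :
    periodicGreen t s = periodicKernel (s - t + 1) := by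
  rcases h.lt_or_eq with h | rfl
  · rw [periodicGreen, if_neg h.not_ge, periodicKernel, show 1 - (s - t + 1) = t - s by ring,
      exp_add]
    ring
  · rw [periodicGreen_of_le le_rfl, periodicKernel, periodicKernel]
    ring_nf

lemma continuous_periodicKernel : Continuous periodicKernel := by
  unfold periodicKernel; fun_prop

lemma hasDerivAt_periodicKernel_sq_primitive (r : ℝ) :
    HasDerivAt (fun r => (exp (2 * r) - exp (2 - 2 * r)) / 2 + 2 * exp 1 * r)
      (exp (2 * r) + exp (2 - 2 * r) + 2 * exp 1) r := by
  have h1 := ((hasDerivAt_id' r).const_mul 2).exp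
  have h2 := (((hasDerivAt_id' r).const_mul 2).const_sub 2).exp
  have h3 := (hasDerivAt_id' r).const_mul (2 * exp 1)
  exact (((h1.sub h2).div_const 2).add h3).congr_deriv (by ring)

lemma periodicKernel_sq (r : ℝ) :
    periodicKernel r ^ 2 = (exp (2 * r) + exp (2 - 2 * r) + 2 * exp 1) / (4 * (exp 1 - 1) ^ 2) := by
  have he : exp 1 - 1 ≠ 0 := sub_ne_zero.2 (by simp)
  have he' : 1 - exp 1 ≠ 0 := by rwa [← neg_sub, neg_ne_zero]
  have h2 : exp (2 * r) = exp r ^ 2 := by rw [← exp_nat_mul]; ring_nf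
  have h2' : exp (2 - 2 * r) = exp (1 - r) ^ 2 := by rw [← exp_nat_mul]; ring_nf
  have h1 : exp 1 = exp r * exp (1 - r) := by rw [← exp_add]; ring_nf
  rw [periodicKernel, h2, h2', div_pow, div_pow]
  field_simp
  rw [h1]
  ring

lemma integral_periodicKernel_sq :
    ∫ r in (0 : ℝ)..1, periodicKernel r ^ 2 = (exp 1 ^ 2 + 2 * exp 1 - 1) / (4 * (exp 1 - 1) ^ 2) := by
  simp_rw [periodicKernel_sq]
  rw [intervalIntegral.integral_div, intervalIntegral.integral_eq_sub_of_hasDerivAt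
    (fun r _ => hasDerivAt_periodicKernel_sq_primitive r) ((by fun_prop : Continuous _).intervalIntegrable _ _)]
  norm_num
  rw [show exp 2 = exp 1 ^ 2 by rw [← exp_nat_mul]; norm_num]
  ring

lemma continuous_periodicGreen (t : ℝ) : Continuous (periodicGreen t) := by
  refine Continuous.if_le (by fun_prop) (by fun_prop) continuous_const continuous_id ?_
  rintro s rfl
  simp only [sub_self, exp_zero]
  ring

lemma integral_periodicGreen_sq {t : ℝ} (ht : t ∈ Icc (0 : ℝ) 1) :
    ∫ s in (0 : ℝ)..1, periodicGreen t s ^ 2 = ∫ r in (0 : ℝ)..1, periodicKernel r ^ 2 := by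
  have hG (a b : ℝ) : IntervalIntegrable (fun s => periodicGreen t s ^ 2) volume a b :=
    ((continuous_periodicGreen t).pow 2).intervalIntegrable a b
  have hk : IntervalIntegrable (fun r => periodicKernel r ^ 2) volume 0 1 :=
    (continuous_periodicKernel.pow 2).intervalIntegrable 0 1
  rw [← integral_comp_sub_add_one_add_integral_comp_sub hk ht,
    ← intervalIntegral.integral_add_adjacent_intervals (hG 0 t) (hG t 1)]
  congr 1 <;> refine intervalIntegral.integral_congr fun s hs => ?_
  · rw [uIcc_of_le ht.1] at hs
    simp only [periodicGreen_of_ge hs.2]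
  · rw [uIcc_of_le ht.2] at hs
    simp only [periodicGreen_of_le hs.1]

/-- `sup_{t∈[0,1]} ‖G(t,·)‖_{L²} = √((e² + 2e − 1)/(4(e−1)²))` for the Green's
function of the periodic problem `x''−x=0`. -/
theorem stmt6 :
    (⨆ t : Icc (0:ℝ) 1, Real.sqrt (∫ s in (0:ℝ)..1, (periodicGreen t s) ^ 2)) =
      Real.sqrt (((exp 1) ^ 2 + 2 * exp 1 - 1) / (4 * (exp 1 - 1) ^ 2)) := by
  have : Nonempty (Icc (0:ℝ) 1) := ⟨⟨0, left_mem_Icc.2 zero_le_one⟩⟩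
  simp_rw [integral_periodicGreen_sq (Subtype.prop _), integral_periodicKernel_sq]
  exact ciSup_const
end

section
/- Let E be a Banach space, G: [0,1]² → ℝ such that t ↦ G(t,·) is continuous from [0,1] to L²([0,1],ℝ), let c ∈ L²([0,1],ℝ), m ≥ 0, and suppose m · sup_{t} ‖G(t,·)‖_{L²} < 1. If x ∈ C([0,1],E) satisfies |x(t)| ≤ ∫₀¹ |G(t,s)|(c(s) + m|x(s)|) ds for all t, then ‖x‖_∞ ≤ (sup_t ‖G(t,·)‖_{L²} · ‖c‖_{L²}) / (1 − m · sup_t ‖G(t,·)‖_{L²}). -/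
open Set MeasureTheory intervalIntegral

/-! By Cauchy–Schwarz in `L²([0,1])`, for every `t`
`‖x t‖ ≤ ‖G(t,·)‖₂ (‖c‖₂ + m ‖‖x‖‖₂) ≤ K (‖c‖₂ + m ‖x‖_∞)`,
the second step because `[0,1]` has measure one. Taking the supremum over `t` gives
`‖x‖_∞ ≤ K ‖c‖₂ + m K ‖x‖_∞`, which can be solved for `‖x‖_∞` since `m K < 1`.
Continuity of `t ↦ G(t,·)` in `L²` is what makes the supremum `K` finite. -/

theorem IsCompact.le_iSup_of_continuousOn {X : Type*} [TopologicalSpace X] {s : Set X}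
    {f : X → ℝ} (hs : IsCompact s) (hf : ContinuousOn f s) {t : X} (ht : t ∈ s) :
    f t ≤ ⨆ u : s, f u :=
  le_ciSup (f := fun u : s => f u) (image_eq_range f s ▸ hs.bddAbove_image hf) ⟨t, ht⟩

theorem le_div_of_le_mul_add {M K C m : ℝ} (h : M ≤ K * (C + m * M)) (hmK : m * K < 1) :
    M ≤ K * C / (1 - m * K) := by
  rw [le_div_iff₀ (by linarith)]
  linarith

namespace MeasureTheory.MemLp

variable {α : Type*} [MeasurableSpace α] {μ : Measure α}

theorem inner_toLp_eq_integral_mul {f g : α → ℝ} (hf : MemLp f 2 μ) (hg : MemLp g 2 μ) :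
    inner ℝ (hf.toLp f) (hg.toLp g) = ∫ a, f a * g a ∂μ := by
  rw [L2.inner_def]
  refine integral_congr_ae ?_
  filter_upwards [hf.coeFn_toLp, hg.coeFn_toLp] with a hfa hga
  simp [hfa, hga, mul_comm]

theorem norm_toLp_eq_sqrt_integral_sq {f : α → ℝ} (hf : MemLp f 2 μ) :
    ‖hf.toLp f‖ = √(∫ a, f a ^ 2 ∂μ) := by
  simp only [norm_eq_sqrt_real_inner, hf.inner_toLp_eq_integral_mul hf, sq]

theorem integral_mul_le_norm_toLp_mul {f g : α → ℝ} (hf : MemLp f 2 μ) (hg : MemLp g 2 μ) :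
    ∫ a, f a * g a ∂μ ≤ ‖hf.toLp f‖ * ‖hg.toLp g‖ :=
  hf.inner_toLp_eq_integral_mul hg ▸ real_inner_le_norm _ _

theorem norm_toLp_le_of_ae_bound [IsProbabilityMeasure μ] {E : Type*} [NormedAddCommGroup E]
    {p : ENNReal} [Fact (1 ≤ p)] {f : α → E} (hf : MemLp f p μ) {C : ℝ} (hC : 0 ≤ C)
    (hfC : ∀ᵐ a ∂μ, ‖f a‖ ≤ C) : ‖hf.toLp f‖ ≤ C := by
  have := Lp.norm_le_of_ae_bound hC (f := hf.toLp f)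
    (by filter_upwards [hf.coeFn_toLp, hfC] with a ha haC; rwa [ha])
  simpa [measureUnivNNReal] using this

theorem integral_abs_mul_add_le {g c y : α → ℝ} {m : ℝ} (hm : 0 ≤ m) (hg : MemLp g 2 μ)
    (hc : MemLp c 2 μ) (hy : MemLp y 2 μ) :
    ∫ a, |g a| * (c a + m * y a) ∂μ ≤ ‖hg.toLp g‖ * (‖hc.toLp c‖ + m * ‖hy.toLp y‖) := by
  have hcy : MemLp (fun a => c a + m * y a) 2 μ := hc.add (hy.const_mul m)
  have hgabs : ‖hg.norm.toLp _‖ = ‖hg.toLp g‖ := by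
    rw [Lp.norm_toLp, Lp.norm_toLp, eLpNorm_norm]
  have hcy_norm : ‖hcy.toLp _‖ ≤ ‖hc.toLp c‖ + m * ‖hy.toLp y‖ := by
    have hsplit : hcy.toLp _ = hc.toLp c + m • hy.toLp y := by
      rw [← MemLp.toLp_const_smul, ← MemLp.toLp_add]; rfl
    calc ‖hcy.toLp _‖ = ‖hc.toLp c + m • hy.toLp y‖ := by rw [hsplit]
      _ ≤ ‖hc.toLp c‖ + ‖m • hy.toLp y‖ := norm_add_le _ _
      _ = ‖hc.toLp c‖ + m * ‖hy.toLp y‖ := by rw [norm_smul, Real.norm_of_nonneg hm]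
  calc ∫ a, |g a| * (c a + m * y a) ∂μ ≤ ‖hg.norm.toLp _‖ * ‖hcy.toLp _‖ :=
        hg.norm.integral_mul_le_norm_toLp_mul hcy
    _ ≤ ‖hg.toLp g‖ * (‖hc.toLp c‖ + m * ‖hy.toLp y‖) := by
        rw [hgabs]; gcongr

end MeasureTheory.MemLp

theorem stmt8_general
    (E : Type*) [NormedAddCommGroup E]
    (G : ℝ → ℝ → ℝ) (c : ℝ → ℝ) (m : ℝ) (hm : 0 ≤ m)
    (hGmem : ∀ t, MemLp (fun s => G t s) 2 (volume.restrict (Icc (0:ℝ) 1)))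
    (hGcont : Continuous fun t : ℝ => (hGmem t).toLp (fun s => G t s))
    (hc : MemLp c 2 (volume.restrict (Icc (0:ℝ) 1)))
    (K : ℝ) (hK : K = ⨆ t : Icc (0:ℝ) 1, Real.sqrt (∫ s in (0:ℝ)..1, (G (t:ℝ) s) ^ 2))
    (hsmall : m * K < 1)
    (x : ℝ → E) (hxc : ContinuousOn x (Icc (0:ℝ) 1))
    (hineq : ∀ t ∈ Icc (0:ℝ) 1,
      ‖x t‖ ≤ ∫ s in (0:ℝ)..1, |G t s| * (c s + m * ‖x s‖)) :
    (⨆ t : Icc (0:ℝ) 1, ‖x (t:ℝ)‖) ≤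
      K * Real.sqrt (∫ s in (0:ℝ)..1, (c s) ^ 2) / (1 - m * K) := by
  set μ := volume.restrict (Icc (0:ℝ) 1)
  have : IsProbabilityMeasure μ := ⟨by simp [μ, Real.volume_Icc]⟩
  have hint (f : ℝ → ℝ) : ∫ s in (0:ℝ)..1, f s = ∫ s, f s ∂μ := by
    rw [integral_of_le zero_le_one, integral_Icc_eq_integral_Ioc]
  simp only [hint] at hK hineq ⊢
  have hGK : ∀ t ∈ Icc (0:ℝ) 1, ‖(hGmem t).toLp _‖ ≤ K := fun t ht => by
    have := isCompact_Icc.le_iSup_of_continuousOn hGcont.norm.continuousOn ht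
    simpa only [MemLp.norm_toLp_eq_sqrt_integral_sq, hK] using this
  have hK0 : 0 ≤ K := (norm_nonneg _).trans (hGK 0 (left_mem_Icc.2 zero_le_one))
  set M := ⨆ t : Icc (0:ℝ) 1, ‖x t‖
  have hxM : ∀ s ∈ Icc (0:ℝ) 1, ‖x s‖ ≤ M := fun s hs =>
    isCompact_Icc.le_iSup_of_continuousOn hxc.norm hs
  have hM0 : 0 ≤ M := (norm_nonneg _).trans (hxM 0 (left_mem_Icc.2 zero_le_one))
  have hxM_ae : ∀ᵐ s ∂μ, ‖‖x s‖‖ ≤ M := by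
    filter_upwards [ae_restrict_mem measurableSet_Icc] with s hs
    rw [norm_norm]; exact hxM s hs
  have hx : MemLp (fun s => ‖x s‖) 2 μ :=
    .of_bound (hxc.aestronglyMeasurable measurableSet_Icc).norm M hxM_ae
  have hxt : ∀ t ∈ Icc (0:ℝ) 1, ‖x t‖ ≤ K * (‖hc.toLp c‖ + m * M) := fun t ht =>
    calc ‖x t‖ ≤ ‖(hGmem t).toLp _‖ * (‖hc.toLp c‖ + m * ‖hx.toLp _‖) :=
          (hineq t ht).trans (MemLp.integral_abs_mul_add_le hm (hGmem t) hc hx)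
      _ ≤ K * (‖hc.toLp c‖ + m * M) := by
          gcongr
          exacts [hGK t ht, hx.norm_toLp_le_of_ae_bound hM0 hxM_ae]
  rw [← hc.norm_toLp_eq_sqrt_integral_sq]
  have : Nonempty (Icc (0:ℝ) 1) := ⟨⟨0, left_mem_Icc.2 zero_le_one⟩⟩
  exact le_div_of_le_mul_add (ciSup_le fun t => hxt t t.2) hsmall

/-- A priori bound. If `t ↦ G(t,·)` is continuous into `L²`, `c ∈ L²`, `m ≥ 0`,
`m · sup_t ‖G(t,·)‖₂ < 1`, and a continuous `x` satisfies
`|x(t)| ≤ ∫₀¹ |G(t,s)|(c(s)+m|x(s)|) ds`, then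
`‖x‖_∞ ≤ sup_t ‖G(t,·)‖₂ · ‖c‖₂ / (1 − m · sup_t ‖G(t,·)‖₂)`. -/
theorem stmt8
    (E : Type*) [NormedAddCommGroup E] [NormedSpace ℝ E]
    (G : ℝ → ℝ → ℝ) (c : ℝ → ℝ) (m : ℝ) (hm : 0 ≤ m)
    (hGmem : ∀ t, MemLp (fun s => G t s) 2 (volume.restrict (Icc (0:ℝ) 1)))
    (hGcont : Continuous fun t : ℝ => (hGmem t).toLp (fun s => G t s))
    (hc : MemLp c 2 (volume.restrict (Icc (0:ℝ) 1)))
    (K : ℝ) (hK : K = ⨆ t : Icc (0:ℝ) 1, Real.sqrt (∫ s in (0:ℝ)..1, (G (t:ℝ) s) ^ 2))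
    (hsmall : m * K < 1)
    (x : ℝ → E) (hxc : ContinuousOn x (Icc (0:ℝ) 1))
    (hineq : ∀ t ∈ Icc (0:ℝ) 1,
      ‖x t‖ ≤ ∫ s in (0:ℝ)..1, |G t s| * (c s + m * ‖x s‖)) :
    (⨆ t : Icc (0:ℝ) 1, ‖x (t:ℝ)‖) ≤
      K * Real.sqrt (∫ s in (0:ℝ)..1, (c s) ^ 2) / (1 - m * K) :=
  stmt8_general E G c m hm hGmem hGcont hc K hK hsmall x hxc hineq
end

section
/- Let E be a Banach space and F: [0,1] × E → (nonempty closed bounded subsets of E) satisfy: d_H(F(t,x), F(t,y)) ≤ μ(t)|x−y| for all x,y ∈ E and a.e. t, with μ ∈ L¹([0,1],ℝ); and d(0, F(t,0)) ≤ α(t) a.e. with α ∈ L¹. Let h ∈ C([0,1],E), G ∈ C([0,1]²,ℝ), and H(w)(t) = ∫₀¹ G(t,s)w(s) ds. Define Φ: L¹([0,1],E) ⊸ L¹([0,1],E) by Φ(u) = {w ∈ L¹ : w(t) ∈ F(t, h(t) + H(u)(t)) a.e.}. Then for all u₁, u₂ ∈ L¹([0,1],E), d_{L¹}(Φ(u₁),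 Φ(u₂)) ≤ ‖μ‖_{L¹} · (sup_{(t,s)} |G(t,s)|) · ‖u₁ − u₂‖_{L¹}. In particular, if ‖μ‖_{L¹} · sup_{(t,s)}|G(t,s)| < 1 then Φ is a multivalued contraction. -/
/-
For `w₁ ∈ Φ u₁` and `ε > 0` we select `w₂ ∈ Φ u₂` with
`‖w₁ t - w₂ t‖ ≤ μ t * ‖x₁ t - x₂ t‖ + ε`, where `xᵢ = h + H uᵢ`; integrating, and using
`‖x₁ t - x₂ t‖ ≤ sup |G| * ‖u₁ - u₂‖₁`, gives the bound. The selection comes from the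
Kuratowski–Ryll-Nardzewski scheme: measurable, countably-valued approximations taken from a
dense sequence of `E` and converging geometrically. The scheme only needs the weak measurability
of `t ↦ F t (x₂ t)`, i.e. the measurability of `t ↦ infDist e (F t (x₂ t))`. For a constant
argument this is the measurable projection theorem applied to the graph of `F · x` (analytic sets
are null-measurable for finite measures, by capacitability); for `x₂` it follows by approximating
`x₂` with simple functions, since `F t` is Lipschitz.
-/

open Set MeasureTheory Metric Filter Topology
open scoped ENNReal

theorem iInter_closure_image_subset_image_pi {X : Type*} [MetricSpace X] {f : (ℕ → ℕ) → X}
    (hf : Continuous f) (σ : ℕ → ℕ) :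
    ⋂ k, closure (f '' {x | ∀ i < k, x i ≤ σ i}) ⊆ f '' univ.pi fun i => Iic (σ i) := by
  intro y hy
  have hx : ∀ k : ℕ, ∃ x : ℕ → ℕ, (∀ i < k, x i ≤ σ i) ∧ dist (f x) y < 1 / (k + 1) := by
    intro k
    obtain ⟨_, ⟨x, hxk, rfl⟩, hxy⟩ :=
      Metric.mem_closure_iff.1 (mem_iInter.1 hy k) (1 / (k + 1)) Nat.one_div_pos_of_nat
    exact ⟨x, hxk, by rwa [dist_comm]⟩
  choose x hxσ hxy using hx
  -- all `x k` lie in a product of finite sets: coordinate `i` is bounded by `σ i` once `k > i`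
  have hbound : ∀ k,
      x k ∈ univ.pi fun i => Iic (max (σ i) ((Finset.range (i + 1)).sup (x · i))) := by
    intro k i _
    rcases lt_or_ge i k with hik | hki
    · exact le_max_of_le_left (hxσ k i hik)
    · exact le_max_of_le_right (Finset.le_sup (f := (x · i)) (by simp; omega))
  obtain ⟨a, -, φ, hφ, hxa⟩ :=
    (isCompact_univ_pi fun i => (finite_Iic _).isCompact).tendsto_subseq hbound
  have hfy : Tendsto (fun k => f (x k)) atTop (𝓝 y) :=
    tendsto_iff_dist_tendsto_zero.2 <| squeeze_zero (fun _ => dist_nonneg)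
      (fun k => (hxy k).le) tendsto_one_div_add_atTop_nhds_zero_nat
  refine ⟨a, fun i _ => ?_,
    tendsto_nhds_unique ((hf.tendsto a).comp hxa) (hfy.comp hφ.tendsto_atTop)⟩
  refine (isClosed_le (continuous_apply i) continuous_const).mem_of_tendsto hxa ?_
  filter_upwards [hφ.tendsto_atTop.eventually_gt_atTop i] with n hn using hxσ _ i hn

section AnalyticSet

variable {X : Type*} [MeasurableSpace X] (μ : Measure X)

theorem exists_lt_measure_image_inter_le (f : (ℕ → ℕ) → X) {D : Set (ℕ → ℕ)} {a ε : ℝ≥0∞}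
    (k : ℕ) (h : a < μ (f '' D) + ε) : ∃ m, a < μ (f '' (D ∩ {x | x k ≤ m})) + ε := by
  have hD : f '' D = ⋃ m, f '' (D ∩ {x | x k ≤ m}) := by
    rw [← image_iUnion, ← inter_iUnion, iUnion_eq_univ_iff.2 fun x => ⟨x k, le_refl (x k)⟩,
      inter_univ]
  have hmono : Monotone fun m => f '' (D ∩ {x | x k ≤ m}) :=
    fun _ _ hmn => image_mono (inter_subset_inter_right _ fun _ hx => le_trans hx hmn)
  rw [hD, hmono.measure_iUnion, ENNReal.iSup_add] at h
  exact lt_iSup_iff.1 h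

theorem exists_forall_lt_measure_image_le (f : (ℕ → ℕ) → X) {a ε : ℝ≥0∞}
    (h : a < μ (range f) + ε) : ∃ σ : ℕ → ℕ, ∀ k, a < μ (f '' {x | ∀ i < k, x i ≤ σ i}) + ε := by
  have step : ∀ (k : ℕ) (D : Set (ℕ → ℕ)), a < μ (f '' D) + ε →
      ∃ m, a < μ (f '' (D ∩ {x | x k ≤ m})) + ε :=
    fun k _ => exists_lt_measure_image_inter_le μ f k
  choose! m hm using step
  let D : ℕ → Set (ℕ → ℕ) := fun k => Nat.rec univ (fun k D => D ∩ {x | x k ≤ m k D}) k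
  have hD : ∀ k, a < μ (f '' D k) + ε := by
    intro k
    induction k with
    | zero => simpa [D, image_univ] using h
    | succ k ih => exact hm k (D k) ih
  refine ⟨fun k => m k (D k), fun k => (hD k).trans_le ?_⟩
  gcongr
  induction k with
  | zero => simp
  | succ k ih =>
    rintro x ⟨hx, hxk⟩ i hi
    rcases Nat.lt_succ_iff_lt_or_eq.1 hi with hi | rfl
    exacts [ih hx i hi, hxk]

variable [MetricSpace X] [OpensMeasurableSpace X] [IsFiniteMeasure μ]

theorem exists_isCompact_subset_range_measure_le_add {f : (ℕ → ℕ) → X} (hf : Continuous f)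
    {ε : ℝ≥0∞} (hε : ε ≠ 0) : ∃ K, IsCompact K ∧ K ⊆ range f ∧ μ (range f) ≤ μ K + ε := by
  obtain ⟨σ, hσ⟩ := exists_forall_lt_measure_image_le μ f
    (ENNReal.lt_add_right (measure_ne_top μ _) hε)
  let C : ℕ → Set X := fun k => closure (f '' {x | ∀ i < k, x i ≤ σ i})
  have hC : Antitone C := fun k l hkl =>
    closure_mono <| image_mono fun x hx i hi => hx i (hi.trans_le hkl)
  refine ⟨_, (isCompact_univ_pi fun i => (finite_Iic (σ i)).isCompact).image hf,
    image_subset_range _ _, ?_⟩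
  calc μ (range f) ≤ ⨅ k, μ (C k) + ε :=
        le_iInf fun k => (hσ k).le.trans (by gcongr; exact subset_closure)
    _ = μ (⋂ k, C k) + ε := by
        rw [← ENNReal.iInf_add, hC.measure_iInter (fun k => isClosed_closure.nullMeasurableSet)
          ⟨0, measure_ne_top μ _⟩]
    _ ≤ _ := by gcongr; exact iInter_closure_image_subset_image_pi hf σ

theorem MeasureTheory.AnalyticSet.nullMeasurableSet {s : Set X} (hs : AnalyticSet s) :
    NullMeasurableSet s μ := by
  rw [AnalyticSet_def] at hs
  rcases hs with rfl | ⟨f, hf, rfl⟩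
  · exact nullMeasurableSet_empty
  choose K hK hKf hfK using fun n : ℕ =>
    exists_isCompact_subset_range_measure_le_add μ hf
      (ENNReal.inv_ne_zero.2 (ENNReal.natCast_ne_top n))
  have hKm : MeasurableSet (⋃ n, K n) := .iUnion fun n => (hK n).isClosed.measurableSet
  refine hKm.nullMeasurableSet.congr (ae_eq_of_subset_of_measure_ge (iUnion_subset hKf) ?_
    hKm.nullMeasurableSet (measure_ne_top μ _))
  refine ENNReal.le_of_forall_pos_le_add fun ε hε _ => ?_
  obtain ⟨n, hn⟩ := ENNReal.exists_inv_nat_lt (a := ε) (by exact_mod_cast hε.ne')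
  exact (hfK n).trans (add_le_add (measure_mono (subset_iUnion K n)) hn.le)

theorem MeasurableSet.nullMeasurableSet_image_fst {E : Type*} [PolishSpace X] [BorelSpace X]
    [TopologicalSpace E] [PolishSpace E] [MeasurableSpace E] [BorelSpace E] {Γ : Set (X × E)}
    (hΓ : MeasurableSet Γ) : NullMeasurableSet (Prod.fst '' Γ) μ :=
  (hΓ.analyticSet.image_of_continuous continuous_fst).nullMeasurableSet μ

end AnalyticSet

theorem Metric.abs_infDist_sub_infDist_le_hausdorffDist {Y : Type*} [PseudoMetricSpace Y]
    {s t : Set Y} (h : hausdorffEDist s t ≠ ⊤) (y : Y) :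
    |infDist y s - infDist y t| ≤ hausdorffDist s t := by
  have h' : hausdorffEDist t s ≠ ⊤ := by rwa [hausdorffEDist_comm]
  have h₁ := infDist_le_infDist_add_hausdorffDist (x := y) h
  have h₂ := infDist_le_infDist_add_hausdorffDist (x := y) h'
  rw [hausdorffDist_comm] at h₂
  exact abs_sub_le_iff.2 ⟨by linarith, by linarith⟩

theorem lipschitzWith_infDist_of_hausdorffDist_le {X Y : Type*} [PseudoMetricSpace X]
    [PseudoMetricSpace Y] {F : X → Set Y} (hne : ∀ x, (F x).Nonempty)
    (hbd : ∀ x, Bornology.IsBounded (F x)) {L : ℝ}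
    (hF : ∀ x y, hausdorffDist (F x) (F y) ≤ L * dist x y) (e : Y) :
    LipschitzWith (Real.toNNReal L) fun x => infDist e (F x) := by
  refine .of_dist_le_mul fun x y => ?_
  rw [Real.dist_eq, Real.coe_toNNReal']
  calc |infDist e (F x) - infDist e (F y)| ≤ hausdorffDist (F x) (F y) :=
        abs_infDist_sub_infDist_le_hausdorffDist
          (hausdorffEDist_ne_top_of_nonempty_of_bounded (hne x) (hne y) (hbd x) (hbd y)) e
    _ ≤ L * dist x y := hF x y
    _ ≤ max L 0 * dist x y := by gcongr; exact le_max_left L 0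

theorem nonneg_of_hausdorffDist_le_mul {X Y : Type*} [MetricSpace X] [Nontrivial X]
    [PseudoMetricSpace Y] {F : X → Set Y} {L : ℝ}
    (hF : ∀ x y, hausdorffDist (F x) (F y) ≤ L * dist x y) : 0 ≤ L := by
  obtain ⟨x, y, hxy⟩ := exists_pair_ne X
  exact (mul_nonneg_iff_of_pos_right (dist_pos.2 hxy)).1 (hausdorffDist_nonneg.trans (hF x y))

section WeakMeasurability

variable {T : Type*} [MeasurableSpace T] {μ : Measure T}

theorem MeasureTheory.SimpleFunc.aemeasurable_bind {X β : Type*} [MeasurableSpace β]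
    (f : SimpleFunc T X) (g : X → T → β) (hg : ∀ x, AEMeasurable (g x) μ) :
    AEMeasurable (fun t => g (f t) t) μ := by
  refine ⟨fun t => (hg (f t)).mk _ t, f.measurable_bind _ fun x => (hg x).measurable_mk, ?_⟩
  filter_upwards [(eventually_all_finset f.range).2 fun x _ => (hg x).ae_eq_mk] with t ht
  exact ht (f t) (f.mem_range_self t)

theorem MeasureTheory.StronglyMeasurable.aemeasurable_bind_of_continuous {X β : Type*}
    [TopologicalSpace X] [TopologicalSpace β] [TopologicalSpace.PseudoMetrizableSpace β]
    [MeasurableSpace β] [BorelSpace β] {x : T → X} (hx : StronglyMeasurable x) {g : X → T → β}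
    (hg : ∀ y, AEMeasurable (g y) μ) (hgc : ∀ᵐ t ∂μ, Continuous fun y => g y t) :
    AEMeasurable (fun t => g (x t) t) μ := by
  refine aemeasurable_of_tendsto_metrizable_ae' (fun n => (hx.approx n).aemeasurable_bind g hg) ?_
  filter_upwards [hgc] with t ht using (ht.tendsto (x t)).comp (hx.tendsto_approx t)

variable [MetricSpace T] [PolishSpace T] [BorelSpace T] [IsFiniteMeasure μ]
  {E : Type*} [MetricSpace E] [CompleteSpace E] [SecondCountableTopology E]
  [MeasurableSpace E] [BorelSpace E]

theorem aemeasurable_infDist_of_measurableSet_graph {S : T → Set E}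
    (hne : ∀ t, (S t).Nonempty) (hS : MeasurableSet {p : T × E | p.2 ∈ S p.1}) (e : E) :
    AEMeasurable (fun t => infDist e (S t)) μ := by
  refine NullMeasurable.aemeasurable (measurable_of_Iio fun q => ?_)
  change NullMeasurableSet {t : T | infDist e (S t) < q} μ
  have hq : {t : T | infDist e (S t) < q} = Prod.fst '' ({p | p.2 ∈ S p.1} ∩ univ ×ˢ ball e q) := by
    ext t
    simp only [mem_image, mem_inter_iff, mem_ofPred_eq, mem_prod, mem_univ,
      true_and, mem_ball, Prod.exists, exists_and_right, exists_eq_right]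
    rw [infDist_lt_iff (hne t)]
    simp_rw [dist_comm e]
  rw [hq]
  exact (hS.inter (MeasurableSet.univ.prod measurableSet_ball)).nullMeasurableSet_image_fst μ

theorem aemeasurable_infDist_apply_of_hausdorffDist_le {X : Type*} [PseudoMetricSpace X]
    {F : T → X → Set E} (hne : ∀ t x, (F t x).Nonempty)
    (hbd : ∀ t x, Bornology.IsBounded (F t x))
    (hgraph : ∀ x, MeasurableSet {p : T × E | p.2 ∈ F p.1 x}) {L : T → ℝ}
    (hL : ∀ᵐ t ∂μ, ∀ x y, hausdorffDist (F t x) (F t y) ≤ L t * dist x y)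
    {x : T → X} (hx : StronglyMeasurable x) (e : E) :
    AEMeasurable (fun t => infDist e (F t (x t))) μ :=
  hx.aemeasurable_bind_of_continuous (g := fun y t => infDist e (F t y))
    (fun y => aemeasurable_infDist_of_measurableSet_graph (hne · y) (hgraph y) e)
    (hL.mono fun t ht =>
      (lipschitzWith_infDist_of_hausdorffDist_le (hne t) (hbd t) ht e).continuous)

end WeakMeasurability

section MeasurableSelection

variable {T : Type*} [MeasurableSpace T] {μ : Measure T}

theorem exists_measurable_ae_mem_of_nullMeasurableSet {A : ℕ → Set T}
    (hA : ∀ j, NullMeasurableSet (A j) μ) (hcover : ∀ᵐ t ∂μ, ∃ j, t ∈ A j) :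
    ∃ g : T → ℕ, Measurable g ∧ ∀ᵐ t ∂μ, t ∈ A (g t) := by
  classical
  choose B hBA hBm hB using fun j => (hA j).exists_measurable_subset_ae_eq
  have hex : ∀ t, ∃ j, t ∈ B j ∨ t ∉ ⋃ i, B i := fun t => by
    by_cases ht : t ∈ ⋃ i, B i
    · exact (mem_iUnion.1 ht).imp fun _ => .inl
    · exact ⟨0, .inr ht⟩
  -- the second disjunct only makes `Nat.find` total; it fails almost everywhere
  refine ⟨fun t => Nat.find (hex t),
    measurable_find hex fun j => (hBm j).union (MeasurableSet.iUnion hBm).compl, ?_⟩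
  filter_upwards [hcover, ae_all_iff.2 fun j => eventuallyEq_set.1 (hB j)] with t ⟨j, hj⟩ hBt
  refine (Nat.find_spec (hex t)).elim (fun h => hBA _ h) fun h => absurd ?_ h
  exact mem_iUnion.2 ⟨j, (hBt j).2 hj⟩

theorem exists_measurable_ae_mem_of_isOpen {E : Type*} [TopologicalSpace E]
    [TopologicalSpace.SeparableSpace E] [Nonempty E] [MeasurableSpace E] {U : T → Set E}
    (hU : ∀ᵐ t ∂μ, IsOpen (U t) ∧ (U t).Nonempty) (hmeas : ∀ y, NullMeasurableSet {t | y ∈ U t} μ) :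
    ∃ v : T → E, Measurable v ∧ ∀ᵐ t ∂μ, v t ∈ U t := by
  obtain ⟨g, hg, hgU⟩ := exists_measurable_ae_mem_of_nullMeasurableSet
    (A := fun j => {t | TopologicalSpace.denseSeq E j ∈ U t}) (fun j => hmeas _) <| by
      filter_upwards [hU] with t ht
      exact (TopologicalSpace.denseRange_denseSeq E).exists_mem_open ht.1 ht.2
  exact ⟨_, measurable_from_nat.comp hg, hgU⟩

variable {E : Type*} [MetricSpace E] [SecondCountableTopology E] [Nonempty E]
  [MeasurableSpace E] [BorelSpace E] {S : T → Set E}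

theorem exists_measurable_ae_dist_lt_and_infDist_lt (hSne : ∀ t, (S t).Nonempty)
    (hS : ∀ e, AEMeasurable (fun t => infDist e (S t)) μ) {v : T → E} (hv : AEMeasurable v μ)
    {r : T → ℝ} (hr : AEMeasurable r μ) (hvS : ∀ᵐ t ∂μ, infDist (v t) (S t) < r t) {r' : ℝ}
    (hr' : 0 < r') :
    ∃ v', Measurable v' ∧ ∀ᵐ t ∂μ, dist (v t) (v' t) < r t ∧ infDist (v' t) (S t) < r' := by
  have hU : ∀ᵐ t ∂μ, IsOpen (ball (v t) (r t) ∩ {y | infDist y (S t) < r'}) ∧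
      (ball (v t) (r t) ∩ {y | infDist y (S t) < r'}).Nonempty := by
    filter_upwards [hvS] with t ht
    refine ⟨isOpen_ball.inter (isOpen_lt (continuous_infDist_pt _) continuous_const), ?_⟩
    obtain ⟨z, hzS, hz⟩ := (infDist_lt_iff (hSne t)).1 ht
    exact ⟨z, mem_ball'.2 hz, by rwa [mem_ofPred_eq, infDist_zero_of_mem hzS]⟩
  obtain ⟨v', hv', hv'U⟩ := exists_measurable_ae_mem_of_isOpen hU fun y =>
    (nullMeasurableSet_lt (aemeasurable_const.dist hv) hr).inter
      (nullMeasurableSet_lt (hS y) aemeasurable_const)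
  exact ⟨v', hv', hv'U.mono fun t ht => ⟨mem_ball'.1 ht.1, ht.2⟩⟩

variable [CompleteSpace E]

theorem exists_ae_mem_dist_le_two_mul_of_infDist_lt (hScl : ∀ t, IsClosed (S t))
    (hSne : ∀ t, (S t).Nonempty) (hS : ∀ e, AEMeasurable (fun t => infDist e (S t)) μ)
    {v₀ : T → E} (hv₀ : Measurable v₀) {δ : ℝ} (hδ : 0 < δ)
    (hv₀S : ∀ᵐ t ∂μ, infDist (v₀ t) (S t) < δ) :
    ∃ v, AEStronglyMeasurable v μ ∧ ∀ᵐ t ∂μ, v t ∈ S t ∧ dist (v₀ t) (v t) ≤ 2 * δ := by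
  let r : ℕ → ℝ := fun k => δ / 2 ^ k
  have step : ∀ (k : ℕ) (v : T → E), Measurable v ∧ (∀ᵐ t ∂μ, infDist (v t) (S t) < r k) →
      ∃ v', (Measurable v' ∧ ∀ᵐ t ∂μ, infDist (v' t) (S t) < r (k + 1)) ∧
        ∀ᵐ t ∂μ, dist (v t) (v' t) < r k := by
    rintro k v ⟨hv, hvS⟩
    obtain ⟨v', hv', h⟩ := exists_measurable_ae_dist_lt_and_infDist_lt hSne hS hv.aemeasurable
      aemeasurable_const hvS (r' := r (k + 1)) (by positivity)
    exact ⟨v', ⟨hv', h.mono fun t ht => ht.2⟩, h.mono fun t ht => ht.1⟩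
  choose! next hnext hdist using step
  let vs : ℕ → T → E := fun k => Nat.rec v₀ next k
  have hvs : ∀ k, Measurable (vs k) ∧ ∀ᵐ t ∂μ, infDist (vs k t) (S t) < r k := by
    intro k
    induction k with
    | zero => exact ⟨hv₀, hv₀S.mono fun t ht => ht.trans_eq (div_one δ).symm⟩
    | succ k ih => exact hnext k (vs k) ih
  have hgeom : ∀ᵐ t ∂μ, ∀ k, infDist (vs k t) (S t) < r k ∧
      dist (vs k t) (vs (k + 1) t) ≤ 2 * δ / 2 / 2 ^ k := by
    refine ae_all_iff.2 fun k => ?_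
    filter_upwards [(hvs k).2, hdist k (vs k) (hvs k)] with t h₁ h₂
    exact ⟨h₁, h₂.le.trans_eq (by ring)⟩
  have hlim : ∀ᵐ t ∂μ, Tendsto (vs · t) atTop (𝓝 (limUnder atTop (vs · t))) := by
    filter_upwards [hgeom] with t ht
    exact (cauchySeq_of_le_geometric_two fun k => (ht k).2).tendsto_limUnder
  refine ⟨fun t => limUnder atTop (vs · t), aestronglyMeasurable_of_tendsto_ae atTop
    (fun k => (hvs k).1.aestronglyMeasurable) hlim, ?_⟩
  filter_upwards [hgeom, hlim] with t ht htend
  refine ⟨((hScl t).mem_iff_infDist_zero (hSne t)).2 ?_,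
    dist_le_of_le_geometric_two_of_tendsto₀ (fun k => (ht k).2) htend⟩
  have hr : Tendsto r atTop (𝓝 0) :=
    tendsto_const_nhds.div_atTop (tendsto_pow_atTop_atTop_of_one_lt one_lt_two)
  exact tendsto_nhds_unique (((continuous_infDist_pt _).tendsto _).comp htend)
    (squeeze_zero (fun _ => infDist_nonneg) (fun k => (ht k).1.le) hr)

theorem exists_ae_mem_dist_le_add_of_infDist_le (hScl : ∀ t, IsClosed (S t))
    (hSne : ∀ t, (S t).Nonempty) (hS : ∀ e, AEMeasurable (fun t => infDist e (S t)) μ)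
    {w : T → E} (hw : AEMeasurable w μ) {ρ : T → ℝ} (hρ : AEMeasurable ρ μ)
    (hwρ : ∀ᵐ t ∂μ, infDist (w t) (S t) ≤ ρ t) {ε : ℝ} (hε : 0 < ε) :
    ∃ v, AEStronglyMeasurable v μ ∧ ∀ᵐ t ∂μ, v t ∈ S t ∧ dist (w t) (v t) ≤ ρ t + ε := by
  obtain ⟨v₀, hv₀, hwv₀⟩ := exists_measurable_ae_dist_lt_and_infDist_lt hSne hS hw
    (hρ.add_const (ε / 2)) (hwρ.mono fun t ht => by linarith) (r' := ε / 4) (by positivity)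
  obtain ⟨v, hv, hv₀v⟩ := exists_ae_mem_dist_le_two_mul_of_infDist_lt hScl hSne hS hv₀
    (by positivity) (hwv₀.mono fun t ht => ht.2)
  refine ⟨v, hv, ?_⟩
  filter_upwards [hwv₀, hv₀v] with t h₀ h
  refine ⟨h.1, (dist_triangle _ (v₀ t) _).trans ?_⟩
  linarith [h₀.1, h.2]

end MeasurableSelection

section SelectionsInL1

variable {T : Type*} [MeasurableSpace T] {μ : Measure T} [IsFiniteMeasure μ]
  {E : Type*} [NormedAddCommGroup E] [CompleteSpace E] [SecondCountableTopology E]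
  [MeasurableSpace E] [BorelSpace E]

theorem infDist_setOf_ae_mem_le_integral {S : T → Set E} (hScl : ∀ t, IsClosed (S t))
    (hSne : ∀ t, (S t).Nonempty) (hS : ∀ e, AEMeasurable (fun t => infDist e (S t)) μ)
    {w : Lp E 1 μ} {ρ : T → ℝ} (hρ : Integrable ρ μ) (hwρ : ∀ᵐ t ∂μ, infDist (w t) (S t) ≤ ρ t) :
    infDist w {v : Lp E 1 μ | ∀ᵐ t ∂μ, v t ∈ S t} ≤ ∫ t, ρ t ∂μ := by
  refine le_of_forall_pos_le_add fun ε hε => ?_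
  set ε' := ε / (μ.real univ + 1)
  have hε' : 0 < ε' := by positivity
  obtain ⟨v, hv, hvS⟩ := exists_ae_mem_dist_le_add_of_infDist_le hScl hSne hS
    (Lp.aestronglyMeasurable w).aemeasurable hρ.aemeasurable hwρ hε'
  have hvint : Integrable v μ := by
    refine ((L1.integrable_coeFn w).norm.add (hρ.add (integrable_const ε'))).mono' hv ?_
    filter_upwards [hvS] with t ht
    calc ‖v t‖ ≤ ‖w t‖ + dist (w t) (v t) := by
          rw [dist_eq_norm, norm_sub_rev]; exact norm_le_insert' _ _
      _ ≤ ‖w t‖ + (ρ t + ε') := by gcongr; exact ht.2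
  have hmem : hvint.toL1 v ∈ {v : Lp E 1 μ | ∀ᵐ t ∂μ, v t ∈ S t} := by
    filter_upwards [hvint.coeFn_toL1, hvS] with t h₁ h₂
    rw [h₁]; exact h₂.1
  calc infDist w _ ≤ dist w (hvint.toL1 v) := infDist_le_dist_of_mem hmem
    _ = ∫ t, dist (w t) (v t) ∂μ := by
        rw [L1.dist_eq_integral_dist]
        refine integral_congr_ae ?_
        filter_upwards [hvint.coeFn_toL1] with t ht
        rw [ht]
    _ ≤ ∫ t, (ρ t + ε') ∂μ :=
        integral_mono_of_nonneg (ae_of_all _ fun _ => dist_nonneg) (hρ.add (integrable_const ε'))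
          (hvS.mono fun t ht => ht.2)
    _ = ∫ t, ρ t ∂μ + ε' * μ.real univ := by
        rw [integral_add hρ (integrable_const ε'), integral_const, smul_eq_mul, mul_comm]
    _ ≤ ∫ t, ρ t ∂μ + ε := by
        gcongr
        rw [div_mul_eq_mul_div, div_le_iff₀ (by positivity)]
        nlinarith

theorem hausdorffDist_setOf_ae_mem_le_integral {S₁ S₂ : T → Set E}
    (hScl₁ : ∀ t, IsClosed (S₁ t)) (hScl₂ : ∀ t, IsClosed (S₂ t))
    (hSne₁ : ∀ t, (S₁ t).Nonempty) (hSne₂ : ∀ t, (S₂ t).Nonempty)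
    (hS₁ : ∀ e, AEMeasurable (fun t => infDist e (S₁ t)) μ)
    (hS₂ : ∀ e, AEMeasurable (fun t => infDist e (S₂ t)) μ) {ρ : T → ℝ} (hρ : Integrable ρ μ)
    (hfin : ∀ᵐ t ∂μ, hausdorffEDist (S₁ t) (S₂ t) ≠ ⊤)
    (hS₁₂ : ∀ᵐ t ∂μ, hausdorffDist (S₁ t) (S₂ t) ≤ ρ t) :
    hausdorffDist {v : Lp E 1 μ | ∀ᵐ t ∂μ, v t ∈ S₁ t} {v | ∀ᵐ t ∂μ, v t ∈ S₂ t} ≤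
      ∫ t, ρ t ∂μ := by
  refine hausdorffDist_le_of_infDist
    (integral_nonneg_of_ae (hS₁₂.mono fun t ht => hausdorffDist_nonneg.trans ht))
    (fun w hw => infDist_setOf_ae_mem_le_integral hScl₂ hSne₂ hS₂ hρ ?_)
    (fun w hw => infDist_setOf_ae_mem_le_integral hScl₁ hSne₁ hS₁ hρ ?_)
  · filter_upwards [hw, hfin, hS₁₂] with t hwt hfint ht
    exact (infDist_le_hausdorffDist_of_mem hwt hfint).trans ht
  · filter_upwards [hw, hfin, hS₁₂] with t hwt hfint ht
    rw [hausdorffEDist_comm] at hfint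
    rw [hausdorffDist_comm] at ht
    exact (infDist_le_hausdorffDist_of_mem hwt hfint).trans ht

end SelectionsInL1

theorem hausdorffDist_setOf_ae_mem_apply_le {T : Type*} [MetricSpace T] [PolishSpace T]
    [MeasurableSpace T] [BorelSpace T] {μ : Measure T} [IsFiniteMeasure μ]
    {X : Type*} [MetricSpace X] [Nontrivial X]
    {E : Type*} [NormedAddCommGroup E] [CompleteSpace E] [SecondCountableTopology E]
    [MeasurableSpace E] [BorelSpace E] {F : T → X → Set E} (hne : ∀ t x, (F t x).Nonempty)
    (hcl : ∀ t x, IsClosed (F t x)) (hbd : ∀ t x, Bornology.IsBounded (F t x))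
    (hgraph : ∀ x, MeasurableSet {p : T × E | p.2 ∈ F p.1 x}) {L : T → ℝ} (hLint : Integrable L μ)
    (hL : ∀ᵐ t ∂μ, ∀ x y, hausdorffDist (F t x) (F t y) ≤ L t * dist x y)
    {x₁ x₂ : T → X} (hx₁ : StronglyMeasurable x₁) (hx₂ : StronglyMeasurable x₂) {d : ℝ}
    (hd : ∀ᵐ t ∂μ, dist (x₁ t) (x₂ t) ≤ d) :
    hausdorffDist {v : Lp E 1 μ | ∀ᵐ t ∂μ, v t ∈ F t (x₁ t)} {v | ∀ᵐ t ∂μ, v t ∈ F t (x₂ t)} ≤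
      (∫ t, L t ∂μ) * d := by
  rw [← integral_mul_const]
  refine hausdorffDist_setOf_ae_mem_le_integral (fun t => hcl _ _) (fun t => hcl _ _)
    (fun t => hne _ _) (fun t => hne _ _)
    (aemeasurable_infDist_apply_of_hausdorffDist_le hne hbd hgraph hL hx₁)
    (aemeasurable_infDist_apply_of_hausdorffDist_le hne hbd hgraph hL hx₂) (hLint.mul_const d)
    (ae_of_all _ fun t => hausdorffEDist_ne_top_of_nonempty_of_bounded (hne _ _) (hne _ _)
      (hbd _ _) (hbd _ _)) ?_
  filter_upwards [hL, hd] with t hLt hdt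
  exact (hLt _ _).trans (mul_le_mul_of_nonneg_left hdt (nonneg_of_hausdorffDist_le_mul hLt))

theorem IsCompact.le_ciSup_of_continuousOn {α : Type*} [TopologicalSpace α] {K : Set α}
    (hK : IsCompact K) {f : α → ℝ} (hf : ContinuousOn f K) {p : α} (hp : p ∈ K) :
    f p ≤ ⨆ q : K, f q :=
  le_ciSup (f := fun q : K => f q) ((hK.bddAbove_image hf).mono (range_subset_iff.2 fun q =>
    mem_image_of_mem f q.2)) ⟨p, hp⟩

section IntegralOperator

variable {E : Type*} [NormedAddCommGroup E] {a b : ℝ}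

theorem MeasureTheory.Lp.intervalIntegrable (u : Lp E 1 (volume.restrict (Icc a b)))
    (hab : a ≤ b) : IntervalIntegrable u volume a b :=
  IntegrableOn.intervalIntegrable (by rw [uIcc_of_le hab]; exact L1.integrable_coeFn u)

theorem MeasureTheory.Lp.dist_eq_intervalIntegral (u₁ u₂ : Lp E 1 (volume.restrict (Icc a b)))
    (hab : a ≤ b) : dist u₁ u₂ = ∫ s in a..b, ‖u₁ s - u₂ s‖ := by
  simp_rw [L1.dist_eq_integral_dist, intervalIntegral.integral_of_le hab, _root_.dist_eq_norm]
  exact integral_Icc_eq_integral_Ioc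

variable [NormedSpace ℝ E]

theorem continuous_intervalIntegral_smul {G : ℝ → ℝ → ℝ}
    (hG : Continuous fun p : ℝ × ℝ => G p.1 p.2) {u : ℝ → E}
    (hu : IntervalIntegrable u volume a b) : Continuous fun t => ∫ s in a..b, G t s • u s := by
  refine continuous_iff_continuousAt.2 fun t₀ => ?_
  obtain ⟨C, hC⟩ := (isCompact_Icc.prod isCompact_uIcc :
    IsCompact (Icc (t₀ - 1) (t₀ + 1) ×ˢ uIcc a b)).exists_bound_of_continuousOn hG.continuousOn
  refine intervalIntegral.continuousAt_of_dominated_interval (bound := fun s => C * ‖u s‖)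
    (Eventually.of_forall fun t =>
      (hG.comp (continuous_const.prodMk continuous_id)).aestronglyMeasurable.smul
        hu.def'.aestronglyMeasurable) ?_ (hu.norm.const_mul C)
    (ae_of_all _ fun s _ => ((hG.comp (continuous_id.prodMk continuous_const)).smul
      continuous_const).continuousAt)
  filter_upwards [Icc_mem_nhds (by linarith : t₀ - 1 < t₀) (by linarith : t₀ < t₀ + 1)] with t ht
  refine ae_of_all _ fun s hs => ?_
  rw [norm_smul]
  exact mul_le_mul_of_nonneg_right (hC (t, s) ⟨ht, uIoc_subset_uIcc hs⟩) (norm_nonneg _)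

theorem norm_intervalIntegral_smul_sub_le {g : ℝ → ℝ} (hg : ContinuousOn g (uIcc a b))
    (hab : a ≤ b) {f₁ f₂ : ℝ → E} (hf₁ : IntervalIntegrable f₁ volume a b)
    (hf₂ : IntervalIntegrable f₂ volume a b) {c : ℝ} (hgc : ∀ s ∈ Icc a b, |g s| ≤ c) :
    ‖(∫ s in a..b, g s • f₁ s) - ∫ s in a..b, g s • f₂ s‖ ≤ c * ∫ s in a..b, ‖f₁ s - f₂ s‖ := by
  have hg₁ : IntervalIntegrable (fun s => g s • f₁ s) volume a b := hf₁.continuousOn_smul hg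
  have hg₂ : IntervalIntegrable (fun s => g s • f₂ s) volume a b := hf₂.continuousOn_smul hg
  rw [← intervalIntegral.integral_sub hg₁ hg₂, ← intervalIntegral.integral_const_mul]
  refine intervalIntegral.norm_integral_le_of_norm_le hab (ae_of_all _ fun s hs => ?_)
    ((hf₁.sub hf₂).norm.const_mul c)
  rw [← smul_sub, norm_smul, Real.norm_eq_abs]
  exact mul_le_mul_of_nonneg_right (hgc s (Ioc_subset_Icc_self hs)) (norm_nonneg _)

theorem MeasureTheory.Lp.norm_intervalIntegral_smul_sub_le {g : ℝ → ℝ}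
    (hg : ContinuousOn g (uIcc a b)) (hab : a ≤ b) (u₁ u₂ : Lp E 1 (volume.restrict (Icc a b)))
    {c : ℝ} (hgc : ∀ s ∈ Icc a b, |g s| ≤ c) :
    ‖(∫ s in a..b, g s • u₁ s) - ∫ s in a..b, g s • u₂ s‖ ≤ c * dist u₁ u₂ := by
  rw [Lp.dist_eq_intervalIntegral u₁ u₂ hab]
  exact _root_.norm_intervalIntegral_smul_sub_le hg hab (Lp.intervalIntegrable u₁ hab)
    (Lp.intervalIntegrable u₂ hab) hgc

end IntegralOperator

theorem stmt9_general
    (E : Type*) [NormedAddCommGroup E] [NormedSpace ℝ E] [CompleteSpace E]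
    [MeasurableSpace E] [BorelSpace E] [SecondCountableTopology E]
    (F : ℝ → E → Set E)
    (hFne : ∀ t x, (F t x).Nonempty)
    (hFcl : ∀ t x, IsClosed (F t x))
    (hFbd : ∀ t x, Bornology.IsBounded (F t x))
    (hFmeas : ∀ x : E, MeasurableSet {p : ℝ × E | p.2 ∈ F p.1 x})
    (μf : ℝ → ℝ)
    (hμint : IntegrableOn μf (Icc (0:ℝ) 1))
    (hLip : ∀ᵐ t ∂(volume.restrict (Icc (0:ℝ) 1)),
      ∀ x y : E, hausdorffDist (F t x) (F t y) ≤ μf t * ‖x - y‖)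
    (h : ℝ → E) (hh : Continuous h)
    (G : ℝ → ℝ → ℝ) (hG : Continuous fun p : ℝ × ℝ => G p.1 p.2)
    (Φ : Lp E 1 (volume.restrict (Icc (0:ℝ) 1)) → Set (Lp E 1 (volume.restrict (Icc (0:ℝ) 1))))
    (hΦ : ∀ u, Φ u = {w | ∀ᵐ t ∂(volume.restrict (Icc (0:ℝ) 1)),
      w t ∈ F t (h t + ∫ s in (0:ℝ)..1, G t s • u s)}) :
    ∀ u₁ u₂, hausdorffDist (Φ u₁) (Φ u₂) ≤
      (∫ t in (0:ℝ)..1, μf t) *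
        (⨆ p : Icc (0:ℝ) 1 ×ˢ Icc (0:ℝ) 1, |G (p : ℝ × ℝ).1 (p : ℝ × ℝ).2|) *
          dist u₁ u₂ := by
  intro u₁ u₂
  -- nontriviality of `E` is what makes `μf` nonnegative a.e.
  rcases subsingleton_or_nontrivial E with hE | hE
  · rw [Lp.ext (ae_of_all _ fun _ => Subsingleton.elim (u₁ _) (u₂ _)), dist_self, mul_zero,
      hausdorffDist_self_zero]
  set c := ⨆ p : Icc (0:ℝ) 1 ×ˢ Icc (0:ℝ) 1, |G (p : ℝ × ℝ).1 (p : ℝ × ℝ).2|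
  let x : Lp E 1 (volume.restrict (Icc (0:ℝ) 1)) → ℝ → E :=
    fun u t => h t + ∫ s in (0:ℝ)..1, G t s • u s
  have hx : ∀ u, StronglyMeasurable (x u) := fun u =>
    (hh.add (continuous_intervalIntegral_smul hG
      (Lp.intervalIntegrable u zero_le_one))).stronglyMeasurable
  have hx₁₂ : ∀ t ∈ Icc (0:ℝ) 1, dist (x u₁ t) (x u₂ t) ≤ c * dist u₁ u₂ := fun t ht => by
    rw [dist_eq_norm, add_sub_add_left_eq_sub]
    exact Lp.norm_intervalIntegral_smul_sub_le
      (hG.comp (continuous_const.prodMk continuous_id)).continuousOn zero_le_one u₁ u₂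
      fun s hs => (isCompact_Icc.prod isCompact_Icc).le_ciSup_of_continuousOn
        hG.abs.continuousOn (p := (t, s)) ⟨ht, hs⟩
  rw [hΦ, hΦ, mul_assoc, intervalIntegral.integral_of_le zero_le_one,
    ← integral_Icc_eq_integral_Ioc]
  exact hausdorffDist_setOf_ae_mem_apply_le hFne hFcl hFbd hFmeas hμint
    (by simpa only [dist_eq_norm] using hLip) (hx u₁) (hx u₂)
    ((ae_restrict_mem measurableSet_Icc).mono hx₁₂)

/-- the operator `u ↦ N_F(h + H(u))` is Lipschitz in Hausdorff distance on
`L¹([0,1],E)` with constant `‖μ‖₁ · sup|G|`; in particular it is a multivalued contraction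
when `‖μ‖₁ · sup|G| < 1`. -/
theorem stmt9
    (E : Type*) [NormedAddCommGroup E] [NormedSpace ℝ E] [CompleteSpace E]
    [MeasurableSpace E] [BorelSpace E] [SecondCountableTopology E]
    (F : ℝ → E → Set E)
    (hFne : ∀ t x, (F t x).Nonempty)
    (hFcl : ∀ t x, IsClosed (F t x))
    (hFbd : ∀ t x, Bornology.IsBounded (F t x))
    (hFmeas : ∀ x : E, MeasurableSet {p : ℝ × E | p.2 ∈ F p.1 x})
    (μf α : ℝ → ℝ)
    (hμint : IntegrableOn μf (Icc (0:ℝ) 1))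
    (hαint : IntegrableOn α (Icc (0:ℝ) 1))
    (hLip : ∀ᵐ t ∂(volume.restrict (Icc (0:ℝ) 1)),
      ∀ x y : E, hausdorffDist (F t x) (F t y) ≤ μf t * ‖x - y‖)
    (hα : ∀ᵐ t ∂(volume.restrict (Icc (0:ℝ) 1)), infDist 0 (F t 0) ≤ α t)
    (h : ℝ → E) (hh : Continuous h)
    (G : ℝ → ℝ → ℝ) (hG : Continuous fun p : ℝ × ℝ => G p.1 p.2)
    (Φ : Lp E 1 (volume.restrict (Icc (0:ℝ) 1)) → Set (Lp E 1 (volume.restrict (Icc (0:ℝ) 1))))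
    (hΦ : ∀ u, Φ u = {w | ∀ᵐ t ∂(volume.restrict (Icc (0:ℝ) 1)),
      w t ∈ F t (h t + ∫ s in (0:ℝ)..1, G t s • u s)}) :
    ∀ u₁ u₂, hausdorffDist (Φ u₁) (Φ u₂) ≤
      (∫ t in (0:ℝ)..1, μf t) *
        (⨆ p : Icc (0:ℝ) 1 ×ˢ Icc (0:ℝ) 1, |G (p : ℝ × ℝ).1 (p : ℝ × ℝ).2|) *
          dist u₁ u₂ :=
  stmt9_general E F hFne hFcl hFbd hFmeas μf hμint hLip h hh G hG Φ hΦ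
end
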